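/- arXiv:2601.08494 — 8 statements merged into one kernel-verified Lean document; each statement's English description precedes it below -/
import Mathlib

section
/- (Proposition 1(2), strict decrease.) Assume the problem is feasible with attained optimal value t⋆, i.e. there is a feasible pair (x⋆,s⋆) with f x⋆ = t⋆ and t⋆ ≤ f x for every feasible pair (x,s). Assume also that for every t ∈ ℝ the infimum defining r⋆(t) is attained by some pair (x,s). Then r⋆ is strictly decreasing on (−∞, t⋆]: for all t₁ < t₂ ≤ t⋆, r⋆(t₂) < r⋆(t₁). -/
/-!
Let `(x, s)` minimise `r(·, ·, t₁)`. If `f x > t₁`, the same pair has strictly smaller merit at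
`t₂ > t₁`, so `r⋆(t₂) < r⋆(t₁)`. Otherwise `r(x, s, t₁) = r₀(x, s)`, and `t₁ < t⋆` makes `(x, s)`
infeasible, i.e. `r₀(x, s) > 0`. Moving by `l` towards a feasible point multiplies `r₀` by at most
`(1 - l)²` (both `‖A x + s - b‖` and the distance to `C` are convex and vanish there), while the
objective penalty is only `O(l²)`; for small `l` this beats the minimiser, a contradiction.
-/

open Metric Set

section InfDist

variable {E : Type*} [NormedAddCommGroup E] [NormedSpace ℝ E]

theorem Convex.convexOn_infDist {C : Set E} (hC : Convex ℝ C) :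
    ConvexOn ℝ univ (infDist · C) := by
  refine ⟨convex_univ, fun x _ y _ a b ha hb hab => ?_⟩
  rcases C.eq_empty_or_nonempty with rfl | hne
  · simp
  simp only [smul_eq_mul]
  refine le_of_forall_pos_le_add fun ε hε => ?_
  obtain ⟨c, hc, hxc⟩ := (infDist_lt_iff hne).1 (lt_add_of_pos_right (infDist x C) hε)
  obtain ⟨d, hd, hyd⟩ := (infDist_lt_iff hne).1 (lt_add_of_pos_right (infDist y C) hε)
  calc infDist (a • x + b • y) C
      ≤ dist (a • x + b • y) (a • c + b • d) := infDist_le_dist_of_mem (hC hc hd ha hb hab)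
    _ ≤ a * dist x c + b * dist y d := by
      rw [dist_eq_norm, dist_eq_norm, dist_eq_norm]
      calc ‖a • x + b • y - (a • c + b • d)‖ = ‖a • (x - c) + b • (y - d)‖ := by
            congr 1; module
        _ ≤ a * ‖x - c‖ + b * ‖y - d‖ := by
            refine (norm_add_le _ _).trans ?_
            rw [norm_smul_of_nonneg ha, norm_smul_of_nonneg hb]
    _ ≤ a * (infDist x C + ε) + b * (infDist y C + ε) := by gcongr
    _ = a * infDist x C + b * infDist y C + ε := by linear_combination ε * hab

end InfDist

theorem exists_sq_mul_add_one_sub_sq_mul_lt {a R : ℝ} (ha : 0 ≤ a) (hR : 0 < R) :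
    ∃ l : ℝ, 0 ≤ l ∧ l ≤ 1 ∧ l ^ 2 * a + (1 - l) ^ 2 * R < R := by
  have hRa : 0 < R + a := by linarith
  refine ⟨R / (R + a), by positivity, (div_le_one hRa).2 (by linarith), ?_⟩
  have hcompl : 1 - R / (R + a) = a / (R + a) := by field_simp; ring
  rw [hcompl, ← sub_pos]
  have hgap : R - ((R / (R + a)) ^ 2 * a + (a / (R + a)) ^ 2 * R) = R ^ 2 / (R + a) := by
    field_simp; ring
  rw [hgap]
  positivity

section Merit

variable {E F : Type*} [NormedAddCommGroup E] [NormedSpace ℝ E]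
  [NormedAddCommGroup F] [NormedSpace ℝ F]
  (f : E → ℝ) (A : E →ₗ[ℝ] F) (b : F) (C : Set F)

/-- The paper's `r₀`; `merit` below is its `r`. -/
noncomputable def feasResidual (x : E) (s : F) : ℝ :=
  (1 / 2) * ‖A x + s - b‖ ^ 2 + (1 / 2) * infDist s C ^ 2

noncomputable def merit (x : E) (s : F) (t : ℝ) : ℝ :=
  (1 / 2) * max (f x - t) 0 ^ 2 + feasResidual A b C x s

variable {f A b C}

theorem feasResidual_nonneg (x : E) (s : F) : 0 ≤ feasResidual A b C x s := by
  unfold feasResidual; positivity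

theorem merit_nonneg (x : E) (s : F) (t : ℝ) : 0 ≤ merit f A b C x s t := by
  unfold merit; have := feasResidual_nonneg (A := A) (b := b) (C := C) x s; positivity

theorem feasResidual_eq_zero_iff (hCcl : IsClosed C) (hCne : C.Nonempty) {x : E} {s : F} :
    feasResidual A b C x s = 0 ↔ A x + s = b ∧ s ∈ C := by
  rw [feasResidual, hCcl.mem_iff_infDist_zero hCne, ← sub_eq_zero (a := A x + s),
    ← norm_eq_zero (a := A x + s - b)]
  constructor
  · intro h
    have hn := sq_nonneg ‖A x + s - b‖
    have hd := sq_nonneg (infDist s C)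
    exact ⟨pow_eq_zero_iff two_ne_zero |>.1 (by linarith),
      pow_eq_zero_iff two_ne_zero |>.1 (by linarith)⟩
  · rintro ⟨h₁, h₂⟩
    simp [h₁, h₂]

theorem feasResidual_convexComb_le (hC : Convex ℝ C) {x x₀ : E} {s s₀ : F}
    (hfeas : A x₀ + s₀ = b) (hs₀ : s₀ ∈ C) {l : ℝ} (hl₀ : 0 ≤ l) (hl₁ : l ≤ 1) :
    feasResidual A b C ((1 - l) • x + l • x₀) ((1 - l) • s + l • s₀)
      ≤ (1 - l) ^ 2 * feasResidual A b C x s := by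
  have hres : A ((1 - l) • x + l • x₀) + ((1 - l) • s + l • s₀) - b
      = (1 - l) • (A x + s - b) := by
    rw [map_add, map_smul, map_smul, ← hfeas]; module
  have hdist : infDist ((1 - l) • s + l • s₀) C ≤ (1 - l) * infDist s C := by
    have := hC.convexOn_infDist.2 (mem_univ s) (mem_univ s₀) (sub_nonneg.2 hl₁) hl₀ (by ring)
    simpa [infDist_zero_of_mem hs₀] using this
  have hdist_sq := pow_le_pow_left₀ infDist_nonneg hdist 2
  rw [feasResidual, feasResidual, hres, norm_smul_of_nonneg (sub_nonneg.2 hl₁)]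
  nlinarith

theorem max_sub_convexComb_le (hf : ConvexOn ℝ univ f) {x x₀ : E} {t l : ℝ} (hx : f x ≤ t)
    (hl₀ : 0 ≤ l) (hl₁ : l ≤ 1) :
    max (f ((1 - l) • x + l • x₀) - t) 0 ≤ l * max (f x₀ - t) 0 := by
  have hconv := hf.2 (mem_univ x) (mem_univ x₀) (sub_nonneg.2 hl₁) hl₀ (by ring)
  simp only [smul_eq_mul] at hconv
  refine max_le ?_ (by positivity)
  nlinarith [le_max_left (f x₀ - t) 0]

theorem exists_merit_lt (hf : ConvexOn ℝ univ f) (hC : Convex ℝ C) {x₀ : E} {s₀ : F}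
    (hfeas : A x₀ + s₀ = b) (hs₀ : s₀ ∈ C) {x : E} {s : F} {t : ℝ} (hx : f x ≤ t)
    (hres : 0 < feasResidual A b C x s) :
    ∃ x' s', merit f A b C x' s' t < merit f A b C x s t := by
  obtain ⟨l, hl₀, hl₁, hl⟩ := exists_sq_mul_add_one_sub_sq_mul_lt
    (a := (1 / 2) * max (f x₀ - t) 0 ^ 2) (by positivity) hres
  refine ⟨(1 - l) • x + l • x₀, (1 - l) • s + l • s₀, ?_⟩
  have hpen := max_sub_convexComb_le hf (x₀ := x₀) hx hl₀ hl₁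
  have hpen_sq := pow_le_pow_left₀ (le_max_right _ _) hpen 2
  have hres' := feasResidual_convexComb_le (x := x) (s := s) hC hfeas hs₀ hl₀ hl₁
  rw [merit, merit, max_eq_right (sub_nonpos.2 hx)]
  nlinarith

theorem lt_apply_of_isMinimizer (hf : ConvexOn ℝ univ f) (hCcl : IsClosed C) (hCcx : Convex ℝ C)
    {x₀ : E} {s₀ : F} (hfeas : A x₀ + s₀ = b ∧ s₀ ∈ C) {tstar : ℝ}
    (hopt : ∀ x s, A x + s = b → s ∈ C → tstar ≤ f x) {x : E} {s : F} {t : ℝ}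
    (hmin : ∀ x' s', merit f A b C x s t ≤ merit f A b C x' s' t) (ht : t < tstar) :
    t < f x := by
  by_contra! hx
  rcases (feasResidual_nonneg x s).eq_or_lt with hzero | hpos
  · obtain ⟨hxs, hs⟩ := (feasResidual_eq_zero_iff hCcl ⟨s₀, hfeas.2⟩).1 hzero.symm
    linarith [hopt x s hxs hs]
  · obtain ⟨x', s', hlt⟩ := exists_merit_lt hf hCcx hfeas.1 hfeas.2 hx hpos
    exact (hmin x' s').not_gt hlt

theorem merit_lt_merit_of_lt (x : E) (s : F) {t t' : ℝ} (ht : t < f x) (htt' : t < t') :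
    merit f A b C x s t' < merit f A b C x s t := by
  have hlt : max (f x - t') 0 < f x - t := max_lt (by linarith) (by linarith)
  rw [merit, merit, max_eq_left (sub_nonneg.2 ht.le)]
  nlinarith [le_max_right (f x - t') 0]

end Merit

theorem stmt_3_general
    (n m : ℕ)
    (f : EuclideanSpace ℝ (Fin n) → ℝ) (hf : ConvexOn ℝ Set.univ f)
    (C : Set (EuclideanSpace ℝ (Fin m))) (hCcl : IsClosed C)
    (hCcx : Convex ℝ C)
    (A : EuclideanSpace ℝ (Fin n) →ₗ[ℝ] EuclideanSpace ℝ (Fin m))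
    (b : EuclideanSpace ℝ (Fin m))
    (r : EuclideanSpace ℝ (Fin n) → EuclideanSpace ℝ (Fin m) → ℝ → ℝ)
    (hr : ∀ x s t, r x s t =
      (1/2) * (max (f x - t) 0)^2
      + ((1/2) * ‖A x + s - b‖^2 + (1/2) * (Metric.infDist s C)^2))
    (rstar : ℝ → ℝ)
    (hrstar : ∀ t, rstar t =
      ⨅ p : EuclideanSpace ℝ (Fin n) × EuclideanSpace ℝ (Fin m), r p.1 p.2 t)
    (tstar : ℝ)
    (xstar : EuclideanSpace ℝ (Fin n)) (sstar : EuclideanSpace ℝ (Fin m))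
    (hfeas : A xstar + sstar = b ∧ sstar ∈ C)
    (hopt : ∀ (x : EuclideanSpace ℝ (Fin n)) (s : EuclideanSpace ℝ (Fin m)),
      A x + s = b → s ∈ C → tstar ≤ f x)
    (hatt : ∀ t : ℝ, ∃ (x : EuclideanSpace ℝ (Fin n)) (s : EuclideanSpace ℝ (Fin m)),
      ∀ (x' : EuclideanSpace ℝ (Fin n)) (s' : EuclideanSpace ℝ (Fin m)),
        r x s t ≤ r x' s' t) :
    ∀ t₁ t₂ : ℝ, t₁ < t₂ → t₂ ≤ tstar → rstar t₂ < rstar t₁ := by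
  have hr_eq : r = merit f A b C := by
    funext x s t; exact hr x s t
  subst hr_eq
  have hbdd (t : ℝ) : BddBelow (range fun p : _ × _ => merit f A b C p.1 p.2 t) :=
    ⟨0, by rintro _ ⟨p, rfl⟩; exact merit_nonneg _ _ _⟩
  intro t₁ t₂ ht₁₂ ht₂
  obtain ⟨x, s, hmin⟩ := hatt t₁
  have hfx : t₁ < f x :=
    lt_apply_of_isMinimizer hf hCcl hCcx hfeas hopt hmin (ht₁₂.trans_le ht₂)
  calc rstar t₂ ≤ merit f A b C x s t₂ := hrstar t₂ ▸ ciInf_le (hbdd t₂) (x, s)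
    _ < merit f A b C x s t₁ := merit_lt_merit_of_lt x s hfx ht₁₂
    _ = rstar t₁ := by
      rw [hrstar]
      exact le_antisymm (le_ciInf fun p => hmin p.1 p.2) (ciInf_le (hbdd t₁) (x, s))

/-- Proposition 1(2), strict decrease of `r⋆` on `(−∞, t⋆]`. -/
theorem stmt_3
    (n m : ℕ)
    (f : EuclideanSpace ℝ (Fin n) → ℝ) (hf : ConvexOn ℝ Set.univ f)
    (C : Set (EuclideanSpace ℝ (Fin m))) (hCne : C.Nonempty) (hCcl : IsClosed C)
    (hCcx : Convex ℝ C)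
    (A : EuclideanSpace ℝ (Fin n) →ₗ[ℝ] EuclideanSpace ℝ (Fin m))
    (b : EuclideanSpace ℝ (Fin m))
    (r : EuclideanSpace ℝ (Fin n) → EuclideanSpace ℝ (Fin m) → ℝ → ℝ)
    (hr : ∀ x s t, r x s t =
      (1/2) * (max (f x - t) 0)^2
      + ((1/2) * ‖A x + s - b‖^2 + (1/2) * (Metric.infDist s C)^2))
    (rstar : ℝ → ℝ)
    (hrstar : ∀ t, rstar t =
      ⨅ p : EuclideanSpace ℝ (Fin n) × EuclideanSpace ℝ (Fin m), r p.1 p.2 t)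
    (tstar : ℝ)
    (xstar : EuclideanSpace ℝ (Fin n)) (sstar : EuclideanSpace ℝ (Fin m))
    (hfeas : A xstar + sstar = b ∧ sstar ∈ C)
    (hval : f xstar = tstar)
    (hopt : ∀ (x : EuclideanSpace ℝ (Fin n)) (s : EuclideanSpace ℝ (Fin m)),
      A x + s = b → s ∈ C → tstar ≤ f x)
    (hatt : ∀ t : ℝ, ∃ (x : EuclideanSpace ℝ (Fin n)) (s : EuclideanSpace ℝ (Fin m)),
      ∀ (x' : EuclideanSpace ℝ (Fin n)) (s' : EuclideanSpace ℝ (Fin m)),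
        r x s t ≤ r x' s' t) :
    ∀ t₁ t₂ : ℝ, t₁ < t₂ → t₂ ≤ tstar → rstar t₂ < rstar t₁ :=
  stmt_3_general n m f hf C hCcl hCcx A b r hr rstar hrstar tstar xstar sstar hfeas hopt hatt
end

section
/- (Proposition 1(3), limiting value.) Let M := ⨅ (x,s), r₀(x,s) (a real infimum, well defined since r₀ is nonnegative). Then r⋆(t) ≥ M for every t ∈ ℝ, and r⋆(t) tends to M as t → +∞ (Filter.Tendsto r⋆ Filter.atTop (nhds M)). -/
/-!
The penalty `(1/2) * (max (f x - t) 0)^2` is nonnegative, so `r⋆ t ≥ M`, and for each fixed `(x, s)`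
it vanishes as soon as `t ≥ f x`. Choosing `(x, s)` with `r₀(x, s)` within `ε` of `M` therefore gives
`r⋆ t ≤ M + ε` for all large `t`.
-/

open Filter Set Topology

lemma tendsto_iInf_of_le_of_eventually_eq {α β ι : Type*} [ConditionallyCompleteLinearOrder β]
    [TopologicalSpace β] [OrderTopology β] [Nonempty ι] {g : ι → β} {F : α → ι → β}
    {l : Filter α} (hg : BddBelow (range g)) (hle : ∀ a p, g p ≤ F a p)
    (hev : ∀ p, ∀ᶠ a in l, F a p = g p) :
    Tendsto (fun a => ⨅ p, F a p) l (𝓝 (⨅ p, g p)) := by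
  refine tendsto_order.2 ⟨fun c hc => Eventually.of_forall fun a => ?_, fun c hc => ?_⟩
  · exact hc.trans_le (ciInf_mono hg (hle a))
  · obtain ⟨p, hp⟩ := exists_lt_of_ciInf_lt hc
    filter_upwards [hev p] with a ha
    exact (ciInf_le (BddBelow.range_mono g (hle a) hg) p).trans_lt (ha ▸ hp)

theorem stmt_4_general
    (n m : ℕ)
    (f : EuclideanSpace ℝ (Fin n) → ℝ)
    (C : Set (EuclideanSpace ℝ (Fin m)))
    (A : EuclideanSpace ℝ (Fin n) →ₗ[ℝ] EuclideanSpace ℝ (Fin m))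
    (b : EuclideanSpace ℝ (Fin m))
    (r : EuclideanSpace ℝ (Fin n) → EuclideanSpace ℝ (Fin m) → ℝ → ℝ)
    (hr : ∀ x s t, r x s t =
      (1/2) * (max (f x - t) 0)^2
      + ((1/2) * ‖A x + s - b‖^2 + (1/2) * (Metric.infDist s C)^2))
    (rstar : ℝ → ℝ)
    (hrstar : ∀ t, rstar t =
      ⨅ p : EuclideanSpace ℝ (Fin n) × EuclideanSpace ℝ (Fin m), r p.1 p.2 t)
    (M : ℝ)
    (hM : M = ⨅ p : EuclideanSpace ℝ (Fin n) × EuclideanSpace ℝ (Fin m),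
      ((1/2) * ‖A p.1 + p.2 - b‖^2 + (1/2) * (Metric.infDist p.2 C)^2)) :
    (∀ t : ℝ, rstar t ≥ M) ∧
    Filter.Tendsto rstar Filter.atTop (nhds M) := by
  set r₀ : EuclideanSpace ℝ (Fin n) × EuclideanSpace ℝ (Fin m) → ℝ :=
    fun p => (1/2) * ‖A p.1 + p.2 - b‖^2 + (1/2) * (Metric.infDist p.2 C)^2
  have hbdd : BddBelow (range r₀) := ⟨0, by rintro _ ⟨p, rfl⟩; positivity⟩
  have hle : ∀ t p, r₀ p ≤ r p.1 p.2 t := fun t p => by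
    rw [hr]
    exact le_add_of_nonneg_left (by positivity)
  have hev : ∀ p, ∀ᶠ t in atTop, r p.1 p.2 t = r₀ p := fun p => by
    filter_upwards [eventually_ge_atTop (f p.1)] with t ht
    simp [hr, r₀, max_eq_right (sub_nonpos.2 ht)]
  subst hM
  exact ⟨fun t => hrstar t ▸ ciInf_mono hbdd (hle t),
    (tendsto_iInf_of_le_of_eventually_eq hbdd hle hev).congr fun t => (hrstar t).symm⟩

/-- Proposition 1(3), limiting value: `r⋆(t) ≥ M` and `r⋆(t) → M` as `t → +∞`,
where `M` is the infimum of `r₀`. -/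
theorem stmt_4
    (n m : ℕ)
    (f : EuclideanSpace ℝ (Fin n) → ℝ) (hf : ConvexOn ℝ Set.univ f)
    (C : Set (EuclideanSpace ℝ (Fin m))) (hCne : C.Nonempty) (hCcl : IsClosed C)
    (hCcx : Convex ℝ C)
    (A : EuclideanSpace ℝ (Fin n) →ₗ[ℝ] EuclideanSpace ℝ (Fin m))
    (b : EuclideanSpace ℝ (Fin m))
    (r : EuclideanSpace ℝ (Fin n) → EuclideanSpace ℝ (Fin m) → ℝ → ℝ)
    (hr : ∀ x s t, r x s t =
      (1/2) * (max (f x - t) 0)^2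
      + ((1/2) * ‖A x + s - b‖^2 + (1/2) * (Metric.infDist s C)^2))
    (rstar : ℝ → ℝ)
    (hrstar : ∀ t, rstar t =
      ⨅ p : EuclideanSpace ℝ (Fin n) × EuclideanSpace ℝ (Fin m), r p.1 p.2 t)
    (M : ℝ)
    (hM : M = ⨅ p : EuclideanSpace ℝ (Fin n) × EuclideanSpace ℝ (Fin m),
      ((1/2) * ‖A p.1 + p.2 - b‖^2 + (1/2) * (Metric.infDist p.2 C)^2)) :
    (∀ t : ℝ, rstar t ≥ M) ∧
    Filter.Tendsto rstar Filter.atTop (nhds M) :=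
  stmt_4_general n m f C A b r hr rstar hrstar M hM
end

section
/- (Proposition 1(3), flat region.) Suppose (x̄,s̄) minimizes r₀, i.e. r₀(x̄,s̄) ≤ r₀(x,s) for all (x,s), and set M := r₀(x̄,s̄). Then for every t ≥ f x̄ one has r⋆(t) = M. -/
theorem ciInf_add_eq_of_nonneg_of_isMinOn {ι : Type*} (φ h : ι → ℝ) (hφ : ∀ i, 0 ≤ φ i)
    (i₀ : ι) (hφi₀ : φ i₀ = 0) (hmin : ∀ i, h i₀ ≤ h i) :
    ⨅ i, (φ i + h i) = h i₀ :=
  have : Nonempty ι := ⟨i₀⟩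
  IsGLB.ciInf_eq <| IsLeast.isGLB
    ⟨⟨i₀, by simp [hφi₀]⟩, by rintro _ ⟨i, rfl⟩; linarith [hφ i, hmin i]⟩

theorem stmt_5_general
    (n m : ℕ)
    (f : EuclideanSpace ℝ (Fin n) → ℝ)
    (C : Set (EuclideanSpace ℝ (Fin m)))
    (A : EuclideanSpace ℝ (Fin n) →ₗ[ℝ] EuclideanSpace ℝ (Fin m))
    (b : EuclideanSpace ℝ (Fin m))
    (r : EuclideanSpace ℝ (Fin n) → EuclideanSpace ℝ (Fin m) → ℝ → ℝ)
    (hr : ∀ x s t, r x s t =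
      (1/2) * (max (f x - t) 0)^2
      + ((1/2) * ‖A x + s - b‖^2 + (1/2) * (Metric.infDist s C)^2))
    (rstar : ℝ → ℝ)
    (hrstar : ∀ t, rstar t =
      ⨅ p : EuclideanSpace ℝ (Fin n) × EuclideanSpace ℝ (Fin m), r p.1 p.2 t)
    (r₀ : EuclideanSpace ℝ (Fin n) → EuclideanSpace ℝ (Fin m) → ℝ)
    (hr₀ : ∀ x s, r₀ x s =
      (1/2) * ‖A x + s - b‖^2 + (1/2) * (Metric.infDist s C)^2)
    (xbar : EuclideanSpace ℝ (Fin n)) (sbar : EuclideanSpace ℝ (Fin m))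
    (hmin : ∀ (x : EuclideanSpace ℝ (Fin n)) (s : EuclideanSpace ℝ (Fin m)),
      r₀ xbar sbar ≤ r₀ x s)
    (M : ℝ) (hM : M = r₀ xbar sbar) :
    ∀ t : ℝ, f xbar ≤ t → rstar t = M := by
  intro t ht
  simp only [hrstar, hr, ← hr₀, hM]
  refine ciInf_add_eq_of_nonneg_of_isMinOn
    (fun p => (1/2) * (max (f p.1 - t) 0)^2) (fun p => r₀ p.1 p.2)
    (fun _ => by positivity) (xbar, sbar) ?_ (fun p => hmin p.1 p.2)
  simp [max_eq_right (sub_nonpos.mpr ht)]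

/-- Proposition 1(3), flat region: if `(x̄,s̄)` minimises `r₀` with value `M`,
then `r⋆(t) = M` for every `t ≥ f x̄`. -/
theorem stmt_5
    (n m : ℕ)
    (f : EuclideanSpace ℝ (Fin n) → ℝ) (hf : ConvexOn ℝ Set.univ f)
    (C : Set (EuclideanSpace ℝ (Fin m))) (hCne : C.Nonempty) (hCcl : IsClosed C)
    (hCcx : Convex ℝ C)
    (A : EuclideanSpace ℝ (Fin n) →ₗ[ℝ] EuclideanSpace ℝ (Fin m))
    (b : EuclideanSpace ℝ (Fin m))
    (r : EuclideanSpace ℝ (Fin n) → EuclideanSpace ℝ (Fin m) → ℝ → ℝ)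
    (hr : ∀ x s t, r x s t =
      (1/2) * (max (f x - t) 0)^2
      + ((1/2) * ‖A x + s - b‖^2 + (1/2) * (Metric.infDist s C)^2))
    (rstar : ℝ → ℝ)
    (hrstar : ∀ t, rstar t =
      ⨅ p : EuclideanSpace ℝ (Fin n) × EuclideanSpace ℝ (Fin m), r p.1 p.2 t)
    (r₀ : EuclideanSpace ℝ (Fin n) → EuclideanSpace ℝ (Fin m) → ℝ)
    (hr₀ : ∀ x s, r₀ x s =
      (1/2) * ‖A x + s - b‖^2 + (1/2) * (Metric.infDist s C)^2)
    (xbar : EuclideanSpace ℝ (Fin n)) (sbar : EuclideanSpace ℝ (Fin m))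
    (hmin : ∀ (x : EuclideanSpace ℝ (Fin n)) (s : EuclideanSpace ℝ (Fin m)),
      r₀ xbar sbar ≤ r₀ x s)
    (M : ℝ) (hM : M = r₀ xbar sbar) :
    ∀ t : ℝ, f xbar ≤ t → rstar t = M :=
  stmt_5_general n m f C A b r hr rstar hrstar r₀ hr₀ xbar sbar hmin M hM
end

section
/- (Lemma 2(1), monotonicity of exact proximal iterates.) Let g : ℝ → ℝ be convex, nonnegative and monotone nonincreasing, and suppose there is t⋆ ∈ ℝ such that g(t) = 0 for all t ≥ t⋆ and g is strictly decreasing on (−∞, t⋆] (for all t₁ < t₂ ≤ t⋆, g(t₂) < g(t₁)); this is the structure of the value function r⋆ when the problem is feasible with attained optimal value t⋆. Let σ : ℕ → ℝ with σ k > 0 for all k, and let (t̂ k) be a sequence with t̂ 0 ≤ t⋆ such that for each k, t̂ (k+1) is a minimizer over ℝ of t ↦ g(t) + (t − t̂ k)²/(2·σ k). Then the sequence (t̂ k) is monotone nondecreasing and t̂ k ≤ t⋆ for every k. -/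
/-!
A proximal step never moves left when `g` is nonincreasing: moving left to `t₁ < t₀` can only
increase `g` and adds a positive quadratic penalty, so `t₀` itself would do better. Starting at or
left of `t⋆` it does not overshoot `t⋆` either: to the right of `t⋆` the objective is the bare
quadratic penalty, which is smaller at `t⋆`. Induction on `k` then gives both claims.
-/

open Set

noncomputable def proxObjective (g : ℝ → ℝ) (σ t₀ t : ℝ) : ℝ :=
  g t + (t - t₀) ^ 2 / (2 * σ)

section ProximalStep

variable {g : ℝ → ℝ} {σ t₀ t₁ : ℝ}

theorem le_of_isMinOn_proxObjective (hg : Antitone g) (hσ : 0 < σ)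
    (h : IsMinOn (proxObjective g σ t₀) univ t₁) : t₀ ≤ t₁ := by
  by_contra! hlt
  have hmin : proxObjective g σ t₀ t₁ ≤ proxObjective g σ t₀ t₀ := h (mem_univ t₀)
  have hpen : 0 < (t₁ - t₀) ^ 2 / (2 * σ) := by
    have : t₁ - t₀ ≠ 0 := sub_ne_zero.mpr hlt.ne
    positivity
  have hgle : g t₀ ≤ g t₁ := hg hlt.le
  simp only [proxObjective, sub_self, ne_eq, OfNat.ofNat_ne_zero, not_false_eq_true, zero_pow,
    zero_div, add_zero] at hmin
  linarith

theorem le_of_isMinOn_proxObjective_of_eqOn_Ici {tstar : ℝ} (hflat : EqOn g 0 (Ici tstar))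
    (hσ : 0 < σ) (ht₀ : t₀ ≤ tstar) (h : IsMinOn (proxObjective g σ t₀) univ t₁) :
    t₁ ≤ tstar := by
  by_contra! hlt
  have hmin : proxObjective g σ t₀ t₁ ≤ proxObjective g σ t₀ tstar := h (mem_univ tstar)
  have hg₁ : g t₁ = 0 := hflat (mem_Ici.mpr hlt.le)
  have hgstar : g tstar = 0 := hflat (mem_Ici.mpr le_rfl)
  simp only [proxObjective, hg₁, hgstar, zero_add] at hmin
  have hsq : (t₁ - t₀) ^ 2 ≤ (tstar - t₀) ^ 2 :=
    (div_le_div_iff_of_pos_right (by positivity)).mp hmin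
  nlinarith

end ProximalStep

theorem stmt_8_general
    (g : ℝ → ℝ)
    (hgmono : ∀ t₁ t₂ : ℝ, t₁ ≤ t₂ → g t₂ ≤ g t₁)
    (tstar : ℝ)
    (hflat : ∀ t : ℝ, tstar ≤ t → g t = 0)
    (σ : ℕ → ℝ) (hσ : ∀ k, 0 < σ k)
    (that : ℕ → ℝ) (h0 : that 0 ≤ tstar)
    (hprox : ∀ k : ℕ, ∀ t : ℝ,
      g (that (k+1)) + (that (k+1) - that k)^2 / (2 * σ k)
        ≤ g t + (t - that k)^2 / (2 * σ k)) :
    Monotone that ∧ ∀ k : ℕ, that k ≤ tstar := by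
  have hstep (k : ℕ) : IsMinOn (proxObjective g (σ k) (that k)) univ (that (k + 1)) :=
    fun t _ => hprox k t
  have hle (k : ℕ) : that k ≤ tstar := by
    induction k with
    | zero => exact h0
    | succ k ih =>
      exact le_of_isMinOn_proxObjective_of_eqOn_Ici (fun t ht => hflat t ht) (hσ k) ih (hstep k)
  exact ⟨monotone_nat_of_le_succ fun k =>
    le_of_isMinOn_proxObjective (fun _ _ h => hgmono _ _ h) (hσ k) (hstep k), hle⟩

/-- Lemma 2(1): monotonicity of exact proximal iterates on the value function. -/
theorem stmt_8
    (g : ℝ → ℝ) (hgcvx : ConvexOn ℝ Set.univ g) (hgnn : ∀ t, 0 ≤ g t)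
    (hgmono : ∀ t₁ t₂ : ℝ, t₁ ≤ t₂ → g t₂ ≤ g t₁)
    (tstar : ℝ)
    (hflat : ∀ t : ℝ, tstar ≤ t → g t = 0)
    (hstrict : ∀ t₁ t₂ : ℝ, t₁ < t₂ → t₂ ≤ tstar → g t₂ < g t₁)
    (σ : ℕ → ℝ) (hσ : ∀ k, 0 < σ k)
    (that : ℕ → ℝ) (h0 : that 0 ≤ tstar)
    (hprox : ∀ k : ℕ, ∀ t : ℝ,
      g (that (k+1)) + (that (k+1) - that k)^2 / (2 * σ k)
        ≤ g t + (t - that k)^2 / (2 * σ k)) :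
    Monotone that ∧ ∀ k : ℕ, that k ≤ tstar :=
  stmt_8_general g hgmono tstar hflat σ hσ that h0 hprox
end

section
/- (Lemma 2(2), exact convergence.) Let g : ℝ → ℝ be convex, nonnegative and monotone nonincreasing, and suppose there is t⋆ ∈ ℝ such that g(t) = 0 for all t ≥ t⋆ and g is strictly decreasing on (−∞, t⋆] (for all t₁ < t₂ ≤ t⋆, g(t₂) < g(t₁)). Let σ : ℕ → ℝ be bounded away from zero (there is σ̲ > 0 with σ k ≥ σ̲ for all k), and let (t̂ k) be a sequence with t̂ 0 ≤ t⋆ such that for each k, t̂ (k+1) is a minimizer over ℝ of t ↦ g(t) + (t − t̂ k)²/(2·σ k). Then t̂ k converges to t⋆ as k → ∞ (and in fact increases monotonically to t⋆). -/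
/-!
The first-order optimality condition of a proximal step `x` from `t₀` says that `(t₀ - x) / σ`
is a subgradient of `g` at `x`; tested against `t⋆`, where `g` vanishes, it gives
`σ g(x) ≤ (x - t₀) (t⋆ - x)`. The iterates increase and stay below `t⋆`, so they converge to
some `L ≤ t⋆` and `g(L) ≤ g(t̂ (k+1)) ≤ (t̂ (k+1) - t̂ k) (t⋆ - t̂ 0) / σ̲ → 0`. Since `g > 0`
on `(-∞, t⋆)`, this forces `L = t⋆`.
-/

open Filter Topology Set

def IsProxStep (g : ℝ → ℝ) (σ t₀ x : ℝ) : Prop :=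
  ∀ t, g x + (x - t₀) ^ 2 / (2 * σ) ≤ g t + (t - t₀) ^ 2 / (2 * σ)

namespace IsProxStep

variable {g : ℝ → ℝ} {σ t₀ x : ℝ}

theorem subgradient_le (hg : ConvexOn ℝ univ g) (hσ : 0 < σ) (h : IsProxStep g σ t₀ x) (y : ℝ) :
    g x + (t₀ - x) / σ * (y - x) ≤ g y := by
  set c := (y - x) ^ 2 / (2 * σ) with hc
  -- compare with the point `x + s (y - x)` and let `s → 0⁺`
  have hsmall : ∀ s ∈ Ioo (0 : ℝ) 1, g x + (t₀ - x) / σ * (y - x) - g y ≤ s * c := by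
    rintro s ⟨hs0, hs1⟩
    have hcvx := hg.2 (mem_univ x) (mem_univ y) (sub_nonneg.2 hs1.le) hs0.le (sub_add_cancel 1 s)
    have hmin := h ((1 - s) * x + s * y)
    simp only [smul_eq_mul] at hcvx
    have hexpand : ((1 - s) * x + s * y - t₀) ^ 2 / (2 * σ)
        = (x - t₀) ^ 2 / (2 * σ) - s * ((t₀ - x) / σ * (y - x)) + s * (s * c) := by
      rw [hc]
      field_simp
      ring
    refine le_of_mul_le_mul_left ?_ hs0
    nlinarith
  have hlim : Tendsto (fun s : ℝ => s * c) (𝓝[>] 0) (𝓝 0) := by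
    simpa using (tendsto_id.mul_const c).mono_left (nhdsWithin_le_nhds (a := (0 : ℝ)))
  have hgap := ge_of_tendsto hlim (eventually_of_mem (Ioo_mem_nhdsGT one_pos) hsmall)
  linarith

theorem start_le (hanti : Antitone g) (hσ : 0 < σ) (h : IsProxStep g σ t₀ x) : t₀ ≤ x := by
  by_contra! hlt
  have hpos : 0 < (x - t₀) ^ 2 / (2 * σ) := by
    have : x - t₀ ≠ 0 := by linarith
    positivity
  have hmin := h t₀
  rw [sub_self, zero_pow two_ne_zero, zero_div, add_zero] at hmin
  linarith [hanti hlt.le]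

theorem le_of_start_le {tstar : ℝ} (hflat : ∀ t, tstar ≤ t → g t = 0) (hσ : 0 < σ)
    (h : IsProxStep g σ t₀ x) (h₀ : t₀ ≤ tstar) : x ≤ tstar := by
  by_contra! hlt
  have hsq : (tstar - t₀) ^ 2 / (2 * σ) < (x - t₀) ^ 2 / (2 * σ) := by
    gcongr
  have hmin := h tstar
  rw [hflat x hlt.le, hflat tstar le_rfl] at hmin
  linarith

theorem apply_le_of_apply_eq_zero (hg : ConvexOn ℝ univ g) (hσ : 0 < σ)
    (h : IsProxStep g σ t₀ x) {tstar : ℝ} (hstar : g tstar = 0) :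
    g x ≤ (x - t₀) * (tstar - x) / σ := by
  have hsub := h.subgradient_le hg hσ tstar
  rw [hstar, div_mul_eq_mul_div] at hsub
  rw [← sub_nonneg] at hsub ⊢
  convert hsub using 1
  ring

end IsProxStep

theorem stmt_9_general
    (g : ℝ → ℝ) (hgcvx : ConvexOn ℝ Set.univ g)
    (hgmono : ∀ t₁ t₂ : ℝ, t₁ ≤ t₂ → g t₂ ≤ g t₁)
    (tstar : ℝ)
    (hflat : ∀ t : ℝ, tstar ≤ t → g t = 0)
    (hstrict : ∀ t₁ t₂ : ℝ, t₁ < t₂ → t₂ ≤ tstar → g t₂ < g t₁)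
    (σ : ℕ → ℝ) (σlow : ℝ) (hσlow : 0 < σlow) (hσ : ∀ k, σlow ≤ σ k)
    (that : ℕ → ℝ) (h0 : that 0 ≤ tstar)
    (hprox : ∀ k : ℕ, ∀ t : ℝ,
      g (that (k+1)) + (that (k+1) - that k)^2 / (2 * σ k)
        ≤ g t + (t - that k)^2 / (2 * σ k)) :
    Filter.Tendsto that Filter.atTop (nhds tstar) ∧ Monotone that := by
  have hσpos k : 0 < σ k := hσlow.trans_le (hσ k)
  have hanti : Antitone g := fun a b hab => hgmono a b hab
  have hstar : g tstar = 0 := hflat tstar le_rfl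
  have hstep k : IsProxStep g (σ k) (that k) (that (k + 1)) := hprox k
  have hmono : Monotone that := monotone_nat_of_le_succ fun k => (hstep k).start_le hanti (hσpos k)
  have hle k : that k ≤ tstar := by
    induction k with
    | zero => exact h0
    | succ k ih => exact (hstep k).le_of_start_le hflat (hσpos k) ih
  obtain ⟨L, hL⟩ : ∃ L, Tendsto that atTop (𝓝 L) :=
    ⟨_, tendsto_atTop_ciSup hmono ⟨tstar, forall_mem_range.2 hle⟩⟩
  have hgap k : g L ≤ (that (k + 1) - that k) * (tstar - that 0) / σlow :=
    calc g L ≤ g (that (k + 1)) := hanti (hmono.ge_of_tendsto hL _)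
      _ ≤ (that (k + 1) - that k) * (tstar - that (k + 1)) / σ k :=
        (hstep k).apply_le_of_apply_eq_zero hgcvx (hσpos k) hstar
      _ ≤ (that (k + 1) - that k) * (tstar - that 0) / σlow := by
        have hinc := hmono (Nat.le_succ k)
        have hfirst := hmono (Nat.zero_le (k + 1))
        gcongr
        all_goals linarith [hle 0, hσ k]
  have hgap_lim :
      Tendsto (fun k => (that (k + 1) - that k) * (tstar - that 0) / σlow) atTop (𝓝 0) := by
    simpa using (((hL.comp (tendsto_add_atTop_nat 1)).sub hL).mul_const _).div_const σlow
  have hLstar : L = tstar := by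
    refine le_antisymm (le_of_tendsto' hL hle) (not_lt.1 fun hlt => ?_)
    linarith [hstrict L tstar hlt le_rfl, ge_of_tendsto' hgap_lim hgap]
  exact ⟨hLstar ▸ hL, hmono⟩

/-- Lemma 2(2): exact convergence of the proximal iterates, `t̂ k ↑ t⋆`. -/
theorem stmt_9
    (g : ℝ → ℝ) (hgcvx : ConvexOn ℝ Set.univ g) (hgnn : ∀ t, 0 ≤ g t)
    (hgmono : ∀ t₁ t₂ : ℝ, t₁ ≤ t₂ → g t₂ ≤ g t₁)
    (tstar : ℝ)
    (hflat : ∀ t : ℝ, tstar ≤ t → g t = 0)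
    (hstrict : ∀ t₁ t₂ : ℝ, t₁ < t₂ → t₂ ≤ tstar → g t₂ < g t₁)
    (σ : ℕ → ℝ) (σlow : ℝ) (hσlow : 0 < σlow) (hσ : ∀ k, σlow ≤ σ k)
    (that : ℕ → ℝ) (h0 : that 0 ≤ tstar)
    (hprox : ∀ k : ℕ, ∀ t : ℝ,
      g (that (k+1)) + (that (k+1) - that k)^2 / (2 * σ k)
        ≤ g t + (t - that k)^2 / (2 * σ k)) :
    Filter.Tendsto that Filter.atTop (nhds tstar) ∧ Monotone that :=
  stmt_9_general g hgcvx hgmono tstar hflat hstrict σ σlow hσlow hσ that h0 hprox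
end

section
/- (Theorem 4, accumulated-error bound.) Let g : ℝ → ℝ be convex, continuous and bounded below. Let σ : ℕ → ℝ with σ k > 0, let ε : ℕ → ℝ with ε k ≥ 0, and let ς ≥ 0. Let (t̂ k) be the exact proximal sequence: t̂ 0 = t 0 and t̂ (k+1) = prox_{σ k · g}(t̂ k); and let (t k) be any sequence satisfying, for every k, |t (k+1) − prox_{σ k · g}(t k)| ≤ ε k · min 1 (|t (k+1) − t k|^ς). Then for every k, |t k − t̂ k| ≤ ∑_{i=0}^{k−1} ε i · min 1 (|t (i+1) − t i|^ς). -/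
/-!
The exact proximal map of a convex function is nonexpansive: comparing `p = prox(x)` with the
points of the segment `[p, q]` yields the variational inequality
`⟪x - p, q - p⟫ ≤ σ (g q - g p)`, and adding it for two base points gives
`‖p - q‖² ≤ ⟪p - q, x - y⟫ ≤ ‖p - q‖ ‖x - y‖`. Hence the distance between the inexact and the
exact iterates grows at each step by at most the error of that step, and summing gives the bound.
-/

open Set Filter Topology

lemma nonneg_of_forall_nonneg_add_mul {a b : ℝ} (h : ∀ l ∈ Ioc (0 : ℝ) 1, 0 ≤ a + l * b) :
    0 ≤ a := by
  have hcont : Continuous fun l : ℝ => a + l * b := by fun_prop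
  have hlim : Tendsto (fun l : ℝ => a + l * b) (𝓝[>] 0) (𝓝 a) := by
    simpa using (hcont.tendsto 0).mono_left nhdsWithin_le_nhds
  exact ge_of_tendsto hlim (Filter.mem_of_superset (Ioc_mem_nhdsGT one_pos) h)

section Prox

variable {E : Type*} [NormedAddCommGroup E] [InnerProductSpace ℝ E]
  {g : E → ℝ} {σ : ℝ} {x p : E}

lemma inner_sub_le_of_isMinOn_prox (hg : ConvexOn ℝ univ g) (hσ : 0 < σ)
    (hp : IsMinOn (fun y => g y + ‖y - x‖ ^ 2 / (2 * σ)) univ p) (q : E) :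
    inner ℝ (x - p) (q - p) ≤ σ * (g q - g p) := by
  suffices 0 ≤ σ * (g q - g p) - inner ℝ (x - p) (q - p) by linarith
  refine nonneg_of_forall_nonneg_add_mul (b := ‖q - p‖ ^ 2 / 2) fun l ⟨hl0, hl1⟩ => ?_
  have hconv : g ((1 - l) • p + l • q) ≤ (1 - l) * g p + l * g q :=
    hg.2 (mem_univ p) (mem_univ q) (by linarith) hl0.le (by ring)
  have hexpand : ‖(1 - l) • p + l • q - x‖ ^ 2 = ‖p - x‖ ^ 2
      + l * (l * ‖q - p‖ ^ 2 - 2 * inner ℝ (x - p) (q - p)) := by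
    have : (1 - l) • p + l • q - x = (p - x) + l • (q - p) := by module
    rw [this, norm_add_sq_real, real_inner_smul_right, norm_smul, Real.norm_eq_abs,
      mul_pow, sq_abs, ← neg_sub x p, inner_neg_left]
    ring
  have hmin := isMinOn_univ_iff.1 hp ((1 - l) • p + l • q)
  simp only [hexpand, add_div] at hmin
  have hscaled :
      0 ≤ l / σ * (σ * (g q - g p) - inner ℝ (x - p) (q - p) + l * (‖q - p‖ ^ 2 / 2)) := by
    have : l / σ * (σ * (g q - g p) - inner ℝ (x - p) (q - p) + l * (‖q - p‖ ^ 2 / 2))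
        = l * (g q - g p) + l * (l * ‖q - p‖ ^ 2 - 2 * inner ℝ (x - p) (q - p)) / (2 * σ) := by
      field_simp
      ring
    rw [this]
    linarith
  exact nonneg_of_mul_nonneg_right hscaled (by positivity)

lemma norm_sub_sq_le_inner_of_isMinOn_prox (hg : ConvexOn ℝ univ g) (hσ : 0 < σ) {y q : E}
    (hp : IsMinOn (fun z => g z + ‖z - x‖ ^ 2 / (2 * σ)) univ p)
    (hq : IsMinOn (fun z => g z + ‖z - y‖ ^ 2 / (2 * σ)) univ q) :
    ‖p - q‖ ^ 2 ≤ inner ℝ (p - q) (x - y) := by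
  have hpq := inner_sub_le_of_isMinOn_prox hg hσ hp q
  have hqp := inner_sub_le_of_isMinOn_prox hg hσ hq p
  have hsum : inner ℝ (x - p) (q - p) + inner ℝ (y - q) (p - q)
      = ‖p - q‖ ^ 2 - inner ℝ (p - q) (x - y) := by
    rw [← real_inner_self_eq_norm_sq]
    simp only [inner_sub_left, inner_sub_right, real_inner_comm x, real_inner_comm y,
      real_inner_comm p q]
    ring
  linarith

lemma lipschitzWith_one_of_isMinOn_prox (hg : ConvexOn ℝ univ g) (hσ : 0 < σ) {P : E → E}
    (hP : ∀ x, IsMinOn (fun z => g z + ‖z - x‖ ^ 2 / (2 * σ)) univ (P x)) :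
    LipschitzWith 1 P := by
  refine LipschitzWith.of_dist_le_mul fun x y => ?_
  rw [NNReal.coe_one, one_mul, dist_eq_norm, dist_eq_norm]
  have hfirm := norm_sub_sq_le_inner_of_isMinOn_prox hg hσ (hP x) (hP y)
  have hcs := real_inner_le_norm (P x - P y) (x - y)
  nlinarith [norm_nonneg (P x - P y), norm_nonneg (x - y)]

end Prox

lemma dist_le_sum_of_lipschitzWith_one {α : Type*} [PseudoMetricSpace α] {T : ℕ → α → α}
    (hT : ∀ k, LipschitzWith 1 (T k)) {s t : ℕ → α} {e : ℕ → ℝ} (hs0 : s 0 = t 0)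
    (hs : ∀ k, s (k + 1) = T k (s k)) (ht : ∀ k, dist (t (k + 1)) (T k (t k)) ≤ e k) (k : ℕ) :
    dist (t k) (s k) ≤ ∑ i ∈ Finset.range k, e i := by
  induction k with
  | zero => simp [hs0]
  | succ k ih =>
    calc dist (t (k + 1)) (s (k + 1))
        ≤ dist (t (k + 1)) (T k (t k)) + dist (T k (t k)) (T k (s k)) := by
          rw [hs k]; exact dist_triangle _ _ _
      _ ≤ e k + dist (t k) (s k) := by
          gcongr
          · exact ht k
          · simpa using (hT k).dist_le_mul (t k) (s k)
      _ ≤ ∑ i ∈ Finset.range (k + 1), e i := by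
          rw [Finset.sum_range_succ]; linarith

theorem stmt_12_general
    (g : ℝ → ℝ) (hgcvx : ConvexOn ℝ Set.univ g)
    (σ : ℕ → ℝ) (hσ : ∀ k, 0 < σ k)
    (ε : ℕ → ℝ)
    (ς : ℝ)
    (prox : ℕ → ℝ → ℝ)
    (hprox : ∀ (k : ℕ) (t₀ t : ℝ),
      g (prox k t₀) + (prox k t₀ - t₀)^2 / (2 * σ k)
        ≤ g t + (t - t₀)^2 / (2 * σ k))
    (t that : ℕ → ℝ)
    (hthat0 : that 0 = t 0)
    (hthat : ∀ k : ℕ, that (k+1) = prox k (that k))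
    (ht : ∀ k : ℕ, |t (k+1) - prox k (t k)| ≤ ε k * min 1 (|t (k+1) - t k| ^ ς)) :
    ∀ k : ℕ, |t k - that k| ≤ ∑ i ∈ Finset.range k, ε i * min 1 (|t (i+1) - t i| ^ ς) := by
  have hlip : ∀ k, LipschitzWith 1 (prox k) := fun k =>
    lipschitzWith_one_of_isMinOn_prox hgcvx (hσ k) fun x => isMinOn_univ_iff.2 fun y => by
      simpa only [Real.norm_eq_abs, sq_abs] using hprox k x y
  intro k
  have ht' : ∀ k, dist (t (k + 1)) (prox k (t k)) ≤ ε k * min 1 (|t (k + 1) - t k| ^ ς) :=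
    fun k => by simpa only [Real.dist_eq] using ht k
  simpa only [Real.dist_eq] using dist_le_sum_of_lipschitzWith_one hlip hthat0 hthat ht' k

/-- Theorem 4, accumulated-error bound for the inexact proximal point iterations. -/
theorem stmt_12
    (g : ℝ → ℝ) (hgcvx : ConvexOn ℝ Set.univ g) (hgcont : Continuous g)
    (B : ℝ) (hgbdd : ∀ t, B ≤ g t)
    (σ : ℕ → ℝ) (hσ : ∀ k, 0 < σ k)
    (ε : ℕ → ℝ) (hε : ∀ k, 0 ≤ ε k)
    (ς : ℝ) (hς : 0 ≤ ς)
    (prox : ℕ → ℝ → ℝ)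
    (hprox : ∀ (k : ℕ) (t₀ t : ℝ),
      g (prox k t₀) + (prox k t₀ - t₀)^2 / (2 * σ k)
        ≤ g t + (t - t₀)^2 / (2 * σ k))
    (t that : ℕ → ℝ)
    (hthat0 : that 0 = t 0)
    (hthat : ∀ k : ℕ, that (k+1) = prox k (that k))
    (ht : ∀ k : ℕ, |t (k+1) - prox k (t k)| ≤ ε k * min 1 (|t (k+1) - t k| ^ ς)) :
    ∀ k : ℕ, |t k - that k| ≤ ∑ i ∈ Finset.range k, ε i * min 1 (|t (i+1) - t i| ^ ς) :=
  stmt_12_general g hgcvx σ hσ ε ς prox hprox t that hthat0 hthat ht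
end

section
/- (Theorem 4, overshoot bound for the limit.) Let g : ℝ → ℝ be convex, continuous and bounded below. Let σ : ℕ → ℝ with σ k > 0, let ε : ℕ → ℝ with ε k ≥ 0 and ∑ ε k < ∞, and let ς ≥ 0. Let (t̂ k) be the exact proximal sequence t̂ 0 = t 0, t̂ (k+1) = prox_{σ k · g}(t̂ k), and assume t̂ k → t⋆ as k → ∞. Let (t k) be any sequence satisfying, for every k, |t (k+1) − prox_{σ k · g}(t k)| ≤ ε k · min 1 (|t (k+1) − t k|^ς), and set λ := ∑'_{k} ε k · min 1 (|t (k+1) − t k|^ς) (a convergent sum since ∑ ε k < ∞). If t k converges to some τ ∈ ℝ, then τ ≤ t⋆ + λ. -/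
/-!
The proximal map of a convex function is nonexpansive. Comparing the minimality of
`p = prox_{σg}(x)` with the points `p + θ (z - p)` of a segment and letting `θ → 0` gives the
variational inequality `g p + ⟪x - p, z - p⟫ / σ ≤ g z`; adding it for two points yields
`‖p - q‖² ≤ ⟪p - q, x - y⟫ ≤ ‖p - q‖ ‖x - y‖`. Hence the errors of the inexact iteration are
never amplified: `|t n - t̂ n|` is at most the sum of the first `n` errors, which is at most `λ`,
and the bound `t n ≤ t̂ n + λ` passes to the limit.
-/

open Filter Topology

def IsProx {E : Type*} [NormedAddCommGroup E] (g : E → ℝ) (σ : ℝ) (x p : E) : Prop :=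
  ∀ z, g p + ‖p - x‖ ^ 2 / (2 * σ) ≤ g z + ‖z - x‖ ^ 2 / (2 * σ)

namespace IsProx

variable {E : Type*} [NormedAddCommGroup E] [InnerProductSpace ℝ E] {g : E → ℝ} {σ : ℝ}

theorem le_add_mul_of_mem_Ioc (hg : ConvexOn ℝ Set.univ g) (hσ : 0 < σ) {x p : E}
    (hp : IsProx g σ x p) (z : E) {θ : ℝ} (hθ : θ ∈ Set.Ioc 0 1) :
    g p + inner ℝ (x - p) (z - p) / σ ≤ g z + θ * (‖z - p‖ ^ 2 / (2 * σ)) := by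
  obtain ⟨hθ0, hθ1⟩ := hθ
  have hconv : g (p + θ • (z - p)) ≤ (1 - θ) * g p + θ * g z := by
    have h := hg.2 (Set.mem_univ p) (Set.mem_univ z) (sub_nonneg.2 hθ1) hθ0.le
      (sub_add_cancel 1 θ)
    rwa [show (1 - θ) • p + θ • z = p + θ • (z - p) by module] at h
  have hexpand : ‖p + θ • (z - p) - x‖ ^ 2 / (2 * σ) = ‖p - x‖ ^ 2 / (2 * σ)
      - θ * (inner ℝ (x - p) (z - p) / σ) + θ * (θ * (‖z - p‖ ^ 2 / (2 * σ))) := by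
    rw [show p + θ • (z - p) - x = (p - x) + θ • (z - p) by abel, norm_add_sq_real,
      inner_smul_right, norm_smul, Real.norm_of_nonneg hθ0.le, ← neg_sub x p, inner_neg_left]
    field_simp
    ring
  have hmin := hp (p + θ • (z - p))
  rw [hexpand] at hmin
  have hscaled : θ * (g p + inner ℝ (x - p) (z - p) / σ)
      ≤ θ * (g z + θ * (‖z - p‖ ^ 2 / (2 * σ))) := by
    linarith
  exact le_of_mul_le_mul_left hscaled hθ0

theorem add_inner_div_le (hg : ConvexOn ℝ Set.univ g) (hσ : 0 < σ) {x p : E}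
    (hp : IsProx g σ x p) (z : E) : g p + inner ℝ (x - p) (z - p) / σ ≤ g z := by
  have hlim : Tendsto (fun θ : ℝ ↦ g z + θ * (‖z - p‖ ^ 2 / (2 * σ))) (𝓝[>] 0) (𝓝 (g z)) :=
    ((by fun_prop : Continuous fun θ : ℝ ↦ g z + θ * (‖z - p‖ ^ 2 / (2 * σ))).tendsto' 0 (g z)
      (by simp)).mono_left nhdsWithin_le_nhds
  exact ge_of_tendsto hlim (Filter.mem_of_superset (Ioc_mem_nhdsGT one_pos)
    fun θ hθ ↦ hp.le_add_mul_of_mem_Ioc hg hσ z hθ)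

theorem norm_sub_le (hg : ConvexOn ℝ Set.univ g) (hσ : 0 < σ) {x y p q : E}
    (hp : IsProx g σ x p) (hq : IsProx g σ y q) : ‖p - q‖ ≤ ‖x - y‖ := by
  have hpq := hp.add_inner_div_le hg hσ q
  have hqp := hq.add_inner_div_le hg hσ p
  have hsum : (inner ℝ (x - p) (q - p) + inner ℝ (y - q) (p - q)) / σ ≤ 0 := by
    rw [add_div]; linarith
  have hid : inner ℝ (x - p) (q - p) + inner ℝ (y - q) (p - q)
      = ‖p - q‖ ^ 2 - inner ℝ (p - q) (x - y) := by
    rw [← real_inner_self_eq_norm_sq]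
    simp only [inner_sub_left, inner_sub_right, real_inner_comm]
    ring
  have hsq : ‖p - q‖ ^ 2 ≤ inner ℝ (p - q) (x - y) := by
    rw [div_le_iff₀ hσ, zero_mul, hid] at hsum
    linarith
  by_contra! hlt
  nlinarith [real_inner_le_norm (p - q) (x - y), norm_nonneg (x - y)]

theorem lipschitzWith_one (hg : ConvexOn ℝ Set.univ g) (hσ : 0 < σ) {P : E → E}
    (hP : ∀ x, IsProx g σ x (P x)) : LipschitzWith 1 P :=
  LipschitzWith.mk_one fun x y ↦ by
    simpa only [dist_eq_norm] using (hP x).norm_sub_le hg hσ (hP y)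

end IsProx

theorem dist_le_sum_of_inexact_iterate {X : Type*} [PseudoMetricSpace X] (P : ℕ → X → X)
    (hP : ∀ k, LipschitzWith 1 (P k)) (s t : ℕ → X) (e : ℕ → ℝ) (h0 : s 0 = t 0)
    (hs : ∀ k, s (k + 1) = P k (s k)) (ht : ∀ k, dist (t (k + 1)) (P k (t k)) ≤ e k) (n : ℕ) :
    dist (t n) (s n) ≤ ∑ k ∈ Finset.range n, e k := by
  induction n with
  | zero => simp [h0]
  | succ n ih =>
    calc dist (t (n + 1)) (s (n + 1))
        ≤ dist (t (n + 1)) (P n (t n)) + dist (P n (t n)) (P n (s n)) := by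
          rw [hs n]; exact dist_triangle _ _ _
      _ ≤ e n + dist (t n) (s n) := by
          gcongr
          · exact ht n
          · simpa using (hP n).dist_le_mul (t n) (s n)
      _ ≤ ∑ k ∈ Finset.range (n + 1), e k := by
          rw [Finset.sum_range_succ]; linarith

theorem stmt_13_general
    (g : ℝ → ℝ) (hgcvx : ConvexOn ℝ Set.univ g)
    (σ : ℕ → ℝ) (hσ : ∀ k, 0 < σ k)
    (ε : ℕ → ℝ) (hε : ∀ k, 0 ≤ ε k) (hεsum : Summable ε)
    (ς : ℝ)
    (prox : ℕ → ℝ → ℝ)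
    (hprox : ∀ (k : ℕ) (t₀ t : ℝ),
      g (prox k t₀) + (prox k t₀ - t₀)^2 / (2 * σ k)
        ≤ g t + (t - t₀)^2 / (2 * σ k))
    (t that : ℕ → ℝ)
    (hthat0 : that 0 = t 0)
    (hthat : ∀ k : ℕ, that (k+1) = prox k (that k))
    (tstar : ℝ) (hthatlim : Filter.Tendsto that Filter.atTop (nhds tstar))
    (ht : ∀ k : ℕ, |t (k+1) - prox k (t k)| ≤ ε k * min 1 (|t (k+1) - t k| ^ ς))
    (lam : ℝ) (hlam : lam = ∑' k : ℕ, ε k * min 1 (|t (k+1) - t k| ^ ς))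
    (τ : ℝ) (hτ : Filter.Tendsto t Filter.atTop (nhds τ)) :
    τ ≤ tstar + lam := by
  set e : ℕ → ℝ := fun k ↦ ε k * min 1 (|t (k+1) - t k| ^ ς)
  have he_nonneg : ∀ k, 0 ≤ e k := fun k ↦
    mul_nonneg (hε k) (le_min zero_le_one (Real.rpow_nonneg (abs_nonneg _) _))
  have he_summable : Summable e := hεsum.of_nonneg_of_le he_nonneg fun k ↦
    mul_le_of_le_one_right (hε k) (min_le_left _ _)
  have hprox_lip : ∀ k, LipschitzWith 1 (prox k) := fun k ↦
    IsProx.lipschitzWith_one hgcvx (hσ k) fun x z ↦ by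
      simpa only [Real.norm_eq_abs, sq_abs] using hprox k x z
  have hclose : ∀ n, t n ≤ that n + lam := fun n ↦ by
    have hdist := dist_le_sum_of_inexact_iterate prox hprox_lip that t e hthat0 hthat ht n
    rw [Real.dist_eq] at hdist
    have hpartial := hlam ▸ he_summable.sum_le_tsum (Finset.range n) (fun k _ ↦ he_nonneg k)
    linarith [le_abs_self (t n - that n)]
  exact le_of_tendsto_of_tendsto' hτ (hthatlim.add tendsto_const_nhds) hclose

/-- Theorem 4, overshoot bound: the limit of the inexact sequence exceeds `t⋆`
by at most the accumulated error `λ`. -/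
theorem stmt_13
    (g : ℝ → ℝ) (hgcvx : ConvexOn ℝ Set.univ g) (hgcont : Continuous g)
    (B : ℝ) (hgbdd : ∀ t, B ≤ g t)
    (σ : ℕ → ℝ) (hσ : ∀ k, 0 < σ k)
    (ε : ℕ → ℝ) (hε : ∀ k, 0 ≤ ε k) (hεsum : Summable ε)
    (ς : ℝ) (hς : 0 ≤ ς)
    (prox : ℕ → ℝ → ℝ)
    (hprox : ∀ (k : ℕ) (t₀ t : ℝ),
      g (prox k t₀) + (prox k t₀ - t₀)^2 / (2 * σ k)
        ≤ g t + (t - t₀)^2 / (2 * σ k))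
    (t that : ℕ → ℝ)
    (hthat0 : that 0 = t 0)
    (hthat : ∀ k : ℕ, that (k+1) = prox k (that k))
    (tstar : ℝ) (hthatlim : Filter.Tendsto that Filter.atTop (nhds tstar))
    (ht : ∀ k : ℕ, |t (k+1) - prox k (t k)| ≤ ε k * min 1 (|t (k+1) - t k| ^ ς))
    (lam : ℝ) (hlam : lam = ∑' k : ℕ, ε k * min 1 (|t (k+1) - t k| ^ ς))
    (τ : ℝ) (hτ : Filter.Tendsto t Filter.atTop (nhds τ)) :
    τ ≤ tstar + lam :=
  stmt_13_general g hgcvx σ hσ ε hε hεsum ς prox hprox t that hthat0 hthat tstar hthatlim ht lam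
    hlam τ hτ
end

section
/- (Lemma 7, quadratic growth of the value function.) Let X := {(x,s) : ∀ (x',s'), r₀(x,s) ≤ r₀(x',s')} be the (assumed nonempty) set of minimizers of r₀, let M be the minimum value of r₀, and assume t⋆ := the minimum of q over X is attained: there is (x⋆,s⋆) ∈ X with q(x⋆) = t⋆ and t⋆ ≤ q(x) for every (x,s) ∈ X. Then there exists a > 0 such that r⋆(t) ≥ a·(t − t⋆)² + M for all t ≤ t⋆. -/
/-!
Minimising `r₀(x, s)` over the slack `s` gives `¼ d(b - A x, C)²`, a quarter of the sum of the
squared violations of `A x ≤ b`. The first-order condition at a minimiser `x⋆` of this sum says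
that `w := (A x⋆ - b)₊` is orthogonal to the range of `A`, which yields the error bound
`Σᵢ ((A x - b - w)ᵢ)₊² ≤ 4 (r₀(x, s) - M)`. Every point of the polyhedron `A x ≤ b + w` also
minimises the sum, so `x⋆` minimises `q` there. Farkas' lemma gives KKT multipliers for that
problem; together with convexity of `q` and Cauchy–Schwarz they bound
`(t⋆ - q x)₊² ≤ κ (r₀(x, s) - M)`. Finally `t⋆ - t ≤ (t⋆ - q x)₊ + (q x - t)₊` turns this into
quadratic growth of `r⋆`.
-/

open Finset Set Filter Topology Metric
open scoped InnerProductSpace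

theorem sq_max_add_le (a h : ℝ) : max (a + h) 0 ^ 2 ≤ (max a 0 + h) ^ 2 := by
  rcases le_total (a + h) 0 with h1 | h1
  · simpa [max_eq_right h1] using sq_nonneg (max a 0 + h)
  · rw [max_eq_left h1]
    exact pow_le_pow_left₀ h1 (by linarith [le_max_left a 0]) 2

theorem sq_max_sub_le {w : ℝ} (hw : 0 ≤ w) (y : ℝ) :
    max (y - w) 0 ^ 2 ≤ max y 0 ^ 2 - 2 * w * y + w ^ 2 := by
  rcases le_total y 0 with hy | hy
  · rw [max_eq_right (by linarith), max_eq_right hy]; nlinarith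
  · rw [max_eq_left hy]
    rcases le_total (y - w) 0 with h | h
    · rw [max_eq_right h]; nlinarith
    · rw [max_eq_left h]; nlinarith

theorem max_mul_self_eq_sq (v : ℝ) : max v 0 * v = max v 0 ^ 2 := by
  rcases le_total v 0 with h | h <;> simp [h, sq]

theorem sq_sub_div_le_of_sq_max_le {κ e u t t₀ : ℝ} (hκ : 0 ≤ κ) (he : 0 ≤ e) (ht : t ≤ t₀)
    (h : max (t₀ - u) 0 ^ 2 ≤ κ * e) :
    (t - t₀) ^ 2 / (4 * (κ + 1)) ≤ (1 / 2) * max (u - t) 0 ^ 2 + e := by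
  have hsplit : t₀ - t ≤ max (t₀ - u) 0 + max (u - t) 0 := by
    linarith [le_max_left (t₀ - u) 0, le_max_left (u - t) 0]
  have hsq : (t - t₀) ^ 2 ≤ 2 * max (t₀ - u) 0 ^ 2 + 2 * max (u - t) 0 ^ 2 := by
    nlinarith [sq_nonneg (max (t₀ - u) 0 - max (u - t) 0)]
  rw [div_le_iff₀ (by positivity)]
  nlinarith [mul_nonneg hκ (sq_nonneg (max (u - t) 0)), mul_nonneg hκ he]

theorem infDist_sq_div_four_le {α : Type*} [PseudoMetricSpace α] (C : Set α) (u s : α) :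
    infDist u C ^ 2 / 4 ≤ (dist s u ^ 2 + infDist s C ^ 2) / 2 := by
  have h := infDist_le_infDist_add_dist (x := u) (y := s) (s := C)
  rw [dist_comm] at h
  nlinarith [infDist_nonneg (x := u) (s := C), sq_nonneg (dist s u - infDist s C)]

theorem exists_dist_sq_add_infDist_sq_le {E : Type*} [NormedAddCommGroup E] [NormedSpace ℝ E]
    [ProperSpace E] {C : Set E} (hC : IsClosed C) (hCne : C.Nonempty) (u : E) :
    ∃ s, (dist s u ^ 2 + infDist s C ^ 2) / 2 ≤ infDist u C ^ 2 / 4 := by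
  obtain ⟨c, hc, hdist⟩ := hC.exists_infDist_eq_dist hCne u
  refine ⟨midpoint ℝ u c, ?_⟩
  have h1 : dist (midpoint ℝ u c) u = dist u c / 2 := by
    rw [dist_midpoint_left]; simp; ring
  have h2 : infDist (midpoint ℝ u c) C ≤ dist u c / 2 := by
    refine (infDist_le_dist_of_mem hc).trans_eq ?_
    rw [dist_midpoint_right]; simp; ring
  rw [h1, hdist]
  nlinarith [infDist_nonneg (x := midpoint ℝ u c) (s := C)]

def nonnegOrthant (ι : Type*) : Set (EuclideanSpace ℝ ι) := {s | ∀ i, 0 ≤ s i}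

theorem isClosed_nonnegOrthant {ι : Type*} : IsClosed (nonnegOrthant ι) := by
  simp only [nonnegOrthant, ofPred_forall]
  exact isClosed_iInter fun i => isClosed_le continuous_const (PiLp.continuous_apply 2 _ i)

theorem infDist_nonnegOrthant_sq {ι : Type*} [Fintype ι] (u : EuclideanSpace ℝ ι) :
    infDist u (nonnegOrthant ι) ^ 2 = ∑ i, max (-u i) 0 ^ 2 := by
  set uplus : EuclideanSpace ℝ ι := WithLp.toLp 2 fun i => max (u i) 0
  have hmem : uplus ∈ nonnegOrthant ι := fun i => le_max_right _ _
  have hproj : ∀ c ∈ nonnegOrthant ι, dist u uplus ≤ dist u c := by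
    intro c hc
    rw [EuclideanSpace.dist_eq, EuclideanSpace.dist_eq]
    gcongr with i
    simp only [uplus, Real.dist_eq]
    have := hc i
    rcases le_total (u i) 0 with h | h
    · rw [max_eq_right h, sub_zero, abs_of_nonpos h, abs_of_nonpos (by linarith)]; linarith
    · simp [max_eq_left h]
  have hinf : infDist u (nonnegOrthant ι) = dist u uplus :=
    le_antisymm (infDist_le_dist_of_mem hmem) ((le_infDist ⟨_, hmem⟩).2 hproj)
  rw [hinf, EuclideanSpace.dist_sq_eq]
  refine sum_congr rfl fun i _ => ?_
  simp only [uplus, Real.dist_eq, sq_abs]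
  rcases le_total (u i) 0 with h | h
  · rw [max_eq_right h, max_eq_left (by linarith)]; ring
  · rw [max_eq_left h, max_eq_right (by linarith)]; ring

section Violation

variable {E ι : Type*} [AddCommGroup E] [Module ℝ E] [Fintype ι]
  (A : E →ₗ[ℝ] EuclideanSpace ℝ ι) (b : EuclideanSpace ℝ ι)

def sqViolation (x : E) : ℝ := ∑ i, max ((A x - b) i) 0 ^ 2

theorem infDist_sub_nonnegOrthant_sq (x : E) :
    infDist (b - A x) (nonnegOrthant ι) ^ 2 = sqViolation A b x := by
  simp [infDist_nonnegOrthant_sq, sqViolation]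

theorem norm_add_sub_eq_dist (x : E) (s : EuclideanSpace ℝ ι) :
    ‖A x + s - b‖ = dist s (b - A x) := by
  rw [dist_eq_norm, show s - (b - A x) = A x + s - b by abel]

theorem sqViolation_div_four_le (x : E) (s : EuclideanSpace ℝ ι) :
    sqViolation A b x / 4 ≤
      (1 / 2) * ‖A x + s - b‖ ^ 2 + (1 / 2) * infDist s (nonnegOrthant ι) ^ 2 := by
  rw [← infDist_sub_nonnegOrthant_sq, norm_add_sub_eq_dist]
  linarith [infDist_sq_div_four_le (nonnegOrthant ι) (b - A x) s]

theorem exists_le_sqViolation_div_four (x : E) :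
    ∃ s : EuclideanSpace ℝ ι,
      (1 / 2) * ‖A x + s - b‖ ^ 2 + (1 / 2) * infDist s (nonnegOrthant ι) ^ 2 ≤
        sqViolation A b x / 4 := by
  obtain ⟨s, hs⟩ := exists_dist_sq_add_infDist_sq_le isClosed_nonnegOrthant
    (⟨0, fun _ => le_rfl⟩ : (nonnegOrthant ι).Nonempty) (b - A x)
  refine ⟨s, ?_⟩
  rw [← infDist_sub_nonnegOrthant_sq, norm_add_sub_eq_dist]
  linarith

variable {A b} {x₀ : E}

theorem sum_max_mul_apply_eq_zero (hmin : ∀ x, sqViolation A b x₀ ≤ sqViolation A b x)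
    (d : E) : ∑ i, max ((A x₀ - b) i) 0 * A d i = 0 := by
  set T := ∑ i, max ((A x₀ - b) i) 0 * A d i
  set S := ∑ i, A d i ^ 2
  have hquad : ∀ ε : ℝ, 0 ≤ S * (ε * ε) + 2 * T * ε + 0 := by
    intro ε
    have hle : sqViolation A b (x₀ + ε • d) ≤ sqViolation A b x₀ + S * (ε * ε) + 2 * T * ε :=
      calc sqViolation A b (x₀ + ε • d)
          ≤ ∑ i, (max ((A x₀ - b) i) 0 + ε * A d i) ^ 2 := by
            refine sum_le_sum fun i _ => ?_
            have hcoord : (A (x₀ + ε • d) - b) i = (A x₀ - b) i + ε * A d i := by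
              simp only [map_add, map_smul, PiLp.add_apply, PiLp.sub_apply, PiLp.smul_apply,
                smul_eq_mul]
              ring
            rw [hcoord]
            exact sq_max_add_le _ _
        _ = sqViolation A b x₀ + S * (ε * ε) + 2 * T * ε := by
            simp only [sqViolation, S, T, mul_sum, sum_mul, ← sum_add_distrib]
            exact sum_congr rfl fun i _ => by ring
    linarith [hmin (x₀ + ε • d)]
  have hdiscrim := discrim_le_zero hquad
  rw [discrim] at hdiscrim
  nlinarith [sq_nonneg T]

theorem sum_sq_max_sub_le_sqViolation_sub (hmin : ∀ x, sqViolation A b x₀ ≤ sqViolation A b x)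
    (x : E) :
    ∑ i, max ((A x - b) i - max ((A x₀ - b) i) 0) 0 ^ 2 ≤
      sqViolation A b x - sqViolation A b x₀ := by
  have hcross : ∑ i, max ((A x₀ - b) i) 0 * (A x - b) i = sqViolation A b x₀ := by
    have hsplit : ∀ i, (A x - b) i = (A x₀ - b) i + A (x - x₀) i := by
      intro i; simp only [map_sub, PiLp.sub_apply]; ring
    simp only [hsplit, mul_add, sum_add_distrib, sum_max_mul_apply_eq_zero hmin, add_zero,
      max_mul_self_eq_sq, sqViolation]
  calc ∑ i, max ((A x - b) i - max ((A x₀ - b) i) 0) 0 ^ 2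
      ≤ ∑ i, (max ((A x - b) i) 0 ^ 2 - 2 * max ((A x₀ - b) i) 0 * (A x - b) i
          + max ((A x₀ - b) i) 0 ^ 2) :=
        sum_le_sum fun i _ => sq_max_sub_le (le_max_right _ _) _
    _ = sqViolation A b x - sqViolation A b x₀ := by
        simp only [sum_add_distrib, sum_sub_distrib, mul_assoc, ← mul_sum, hcross, sqViolation]
        ring

end Violation

section Farkas

variable {ι H : Type*} [NormedAddCommGroup H] [InnerProductSpace ℝ H] {a : ι → H}
  {s : Finset ι}

theorem mem_hull_image_finset_iff {x : H} :
    x ∈ PointedCone.hull ℝ (a '' s) ↔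
      ∃ μ : ι → ℝ, (∀ i ∈ s, 0 ≤ μ i) ∧ ∑ i ∈ s, μ i • a i = x := by
  rw [PointedCone.hull, Submodule.mem_span_image_finset_iff_exists_fun']
  constructor
  · rintro ⟨c, rfl⟩
    exact ⟨fun i => c i, fun i _ => (c i).2, by simp only [Nonneg.coe_smul]⟩
  · rintro ⟨μ, hμ, rfl⟩
    refine ⟨fun i => ⟨max (μ i) 0, le_max_right _ _⟩, sum_congr rfl fun i hi => ?_⟩
    rw [Nonneg.mk_smul, max_eq_left (hμ i hi)]

theorem exists_sum_smul_eq_zero_pos_of_not_linearIndepOn (h : ¬LinearIndepOn ℝ a s) :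
    ∃ c : ι → ℝ, ∑ i ∈ s, c i • a i = 0 ∧ ∃ i ∈ s, 0 < c i := by
  obtain ⟨c, hc, i, hi, hci⟩ := not_linearIndepOn_finset_iff.1 h
  rcases hci.lt_or_gt with hneg | hpos
  · exact ⟨-c, by simp [neg_smul, sum_neg_distrib, hc], i, hi, by simpa using hneg⟩
  · exact ⟨c, hc, i, hi, hpos⟩

theorem exists_sub_mul_nonneg_eq_zero {μ c : ι → ℝ} (hμ : ∀ i ∈ s, 0 ≤ μ i)
    (hc : ∃ i ∈ s, 0 < c i) :
    ∃ t : ℝ, ∃ i₀ ∈ s, (∀ i ∈ s, 0 ≤ μ i - t * c i) ∧ μ i₀ - t * c i₀ = 0 := by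
  classical
  -- the step `t` is the smallest ratio `μ i / c i` over the indices with `c i > 0`
  obtain ⟨i₀, hi₀, hmin⟩ := (s.filter (0 < c ·)).exists_min_image (fun i => μ i / c i)
    (by simpa [Finset.Nonempty] using hc)
  rw [mem_filter] at hi₀
  refine ⟨μ i₀ / c i₀, i₀, hi₀.1, fun i hi => ?_, by field_simp [hi₀.2.ne']; ring⟩
  have ht : 0 ≤ μ i₀ / c i₀ := div_nonneg (hμ i₀ hi₀.1) hi₀.2.le
  rcases le_or_gt (c i) 0 with hci | hci
  · nlinarith [hμ i hi]
  · have := hmin i (mem_filter.2 ⟨hi, hci⟩)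
    rw [le_div_iff₀ hci] at this
    linarith

theorem hull_image_finset_subset_iUnion_erase [DecidableEq ι] (h : ¬LinearIndepOn ℝ a s) :
    (PointedCone.hull ℝ (a '' s) : Set H) ⊆
      ⋃ i ∈ s, PointedCone.hull ℝ (a '' (s.erase i)) := by
  intro x hx
  obtain ⟨μ, hμ, rfl⟩ := mem_hull_image_finset_iff.1 hx
  obtain ⟨c, hc, hcpos⟩ := exists_sum_smul_eq_zero_pos_of_not_linearIndepOn h
  obtain ⟨t, i₀, hi₀, hnonneg, hzero⟩ := exists_sub_mul_nonneg_eq_zero hμ hcpos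
  refine mem_iUnion₂.2 ⟨i₀, hi₀, mem_hull_image_finset_iff.2
    ⟨fun i => μ i - t * c i, fun i hi => hnonneg i (mem_of_mem_erase hi), ?_⟩⟩
  rw [sum_erase _ (by simp [hzero])]
  simp only [sub_smul, sum_sub_distrib, mul_smul, ← smul_sum, hc, smul_zero, sub_zero]

theorem isClosed_hull_image_finset_of_linearIndepOn [FiniteDimensional ℝ H]
    (h : LinearIndepOn ℝ a s) : IsClosed (PointedCone.hull ℝ (a '' s) : Set H) := by
  set L := Fintype.linearCombination ℝ fun i : s => a i
  have hL : LinearMap.ker L = ⊥ :=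
    LinearMap.ker_eq_bot.2 (linearIndependent_iff_injective_fintypeLinearCombination.1 h)
  have himage : (PointedCone.hull ℝ (a '' s) : Set H) = L '' Ici 0 := by
    ext x
    rw [SetLike.mem_coe, PointedCone.hull, Submodule.mem_span_image_finset_iff_exists_fun]
    constructor
    · rintro ⟨c, rfl⟩
      exact ⟨fun i => c i, fun i => (c i).2, by simp [L, Fintype.linearCombination_apply]⟩
    · rintro ⟨ν, hν, rfl⟩
      exact ⟨fun i => ⟨ν i, hν i⟩, by simp [L, Fintype.linearCombination_apply, Nonneg.mk_smul]⟩
  rw [himage]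
  exact (LinearMap.isClosedEmbedding_of_injective hL).isClosedMap _ isClosed_Ici

theorem isClosed_hull_image_finset [FiniteDimensional ℝ H] (a : ι → H) (s : Finset ι) :
    IsClosed (PointedCone.hull ℝ (a '' s) : Set H) := by
  classical
  induction s using Finset.strongInduction with
  | H s ih =>
    by_cases h : LinearIndepOn ℝ a s
    · exact isClosed_hull_image_finset_of_linearIndepOn h
    · have hmono : ∀ i ∈ s, (PointedCone.hull ℝ (a '' (s.erase i)) : Set H) ⊆
          PointedCone.hull ℝ (a '' s) := fun i _ =>
        Submodule.span_mono (image_mono (coe_subset.2 (erase_subset i s)))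
      rw [(hull_image_finset_subset_iUnion_erase h).antisymm (iUnion₂_subset hmono)]
      exact isClosed_biUnion_finset fun i hi => ih _ (erase_ssubset hi)

theorem exists_nonneg_sum_smul_eq_of_forall_inner_nonpos [FiniteDimensional ℝ H] {c : H}
    (h : ∀ d, (∀ i ∈ s, ⟪a i, d⟫_ℝ ≤ 0) → ⟪c, d⟫_ℝ ≤ 0) :
    ∃ μ : ι → ℝ, (∀ i ∈ s, 0 ≤ μ i) ∧ ∑ i ∈ s, μ i • a i = c := by
  rw [← mem_hull_image_finset_iff]
  by_contra hc
  obtain ⟨y, hy, hcy⟩ := ProperCone.hyperplane_separation'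
    (⟨PointedCone.hull ℝ (a '' s), isClosed_hull_image_finset a s⟩ : ProperCone ℝ H) hc
  have hd := h (-y) fun i hi => by
    simpa [inner_neg_right] using hy (a i) (PointedCone.subset_hull (mem_image_of_mem a hi))
  rw [inner_neg_right] at hd
  linarith

theorem convex_setOf_forall_inner_le (a : ι → H) (β : ι → ℝ) :
    Convex ℝ {x | ∀ i, ⟪a i, x⟫_ℝ ≤ β i} := by
  simp only [ofPred_forall]
  exact convex_iInter fun i => convex_halfSpace_le (innerₛₗ ℝ (a i)).isLinear (β i)

end Farkas

section Quadratic

variable {H : Type*} [NormedAddCommGroup H] [InnerProductSpace ℝ H] {Q : H →ₗ[ℝ] H} (p : H)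

variable (Q) in
noncomputable def quadraticObjective (x : H) : ℝ := (1 / 2) * ⟪x, Q x⟫_ℝ + ⟪p, x⟫_ℝ

theorem quadraticObjective_add (hQ : Q.IsSymmetric) (x d : H) :
    quadraticObjective Q p (x + d) =
      quadraticObjective Q p x + ⟪Q x + p, d⟫_ℝ + (1 / 2) * ⟪d, Q d⟫_ℝ := by
  simp only [quadraticObjective, map_add, inner_add_left, inner_add_right]
  rw [← hQ x d, real_inner_comm (Q x) d]
  ring

theorem quadraticObjective_add_inner_le (hQ : Q.IsPositive) (x y : H) :
    quadraticObjective Q p x + ⟪Q x + p, y - x⟫_ℝ ≤ quadraticObjective Q p y := by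
  have h := quadraticObjective_add p hQ.isSymmetric x (y - x)
  rw [add_sub_cancel] at h
  have hpos := hQ.re_inner_nonneg_right (y - x)
  rw [RCLike.re_to_real] at hpos
  linarith

theorem hasGradientAt_quadraticObjective [FiniteDimensional ℝ H] (hQ : Q.IsSymmetric) (x : H) :
    HasGradientAt (quadraticObjective Q p) (Q x + p) x := by
  rw [hasGradientAt_iff_hasFDerivAt]
  have hQx := (LinearMap.toContinuousLinearMap Q).hasFDerivAt (x := x)
  have h := (((hasFDerivAt_id x).inner ℝ hQx).const_mul (1 / 2)).add
    ((innerSL ℝ p).hasFDerivAt (x := x))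
  refine h.congr_fderiv (ContinuousLinearMap.ext fun d => ?_)
  simp [fderivInnerCLM_apply]
  rw [← hQ x d, real_inner_comm (Q x) d]
  ring

end Quadratic

section KKT

variable {ι H : Type*} [Fintype ι] [NormedAddCommGroup H] [InnerProductSpace ℝ H]
  {a : ι → H} {β : ι → ℝ} {x₀ : H}

theorem exists_pos_forall_inner_add_smul_le (hx₀ : ∀ i, ⟪a i, x₀⟫_ℝ ≤ β i) {d : H}
    (hd : ∀ i, ⟪a i, x₀⟫_ℝ = β i → ⟪a i, d⟫_ℝ ≤ 0) :
    ∃ ε : ℝ, 0 < ε ∧ ∀ i, ⟪a i, x₀ + ε • d⟫_ℝ ≤ β i := by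
  have hev : ∀ᶠ ε in 𝓝[>] (0 : ℝ), ∀ i, ⟪a i, x₀ + ε • d⟫_ℝ ≤ β i := by
    refine eventually_all.2 fun i => ?_
    simp only [inner_add_right, inner_smul_right]
    rcases (hx₀ i).lt_or_eq with hlt | heq
    · have hcont : Continuous fun ε : ℝ => ⟪a i, x₀⟫_ℝ + ε * ⟪a i, d⟫_ℝ := by fun_prop
      have hlim : Tendsto (fun ε : ℝ => ⟪a i, x₀⟫_ℝ + ε * ⟪a i, d⟫_ℝ) (𝓝 0)
          (𝓝 ⟪a i, x₀⟫_ℝ) := by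
        simpa using hcont.tendsto 0
      exact nhdsWithin_le_nhds ((hlim.eventually (gt_mem_nhds hlt)).mono fun _ => le_of_lt)
    · filter_upwards [self_mem_nhdsWithin] with ε (hε : 0 < ε)
      nlinarith [hd i heq]
  obtain ⟨ε, hε, hεpos⟩ := (hev.and self_mem_nhdsWithin).exists
  exact ⟨ε, hεpos, hε⟩

theorem exists_kkt_of_isMinOn [FiniteDimensional ℝ H] {f : H → ℝ} {g : H}
    (hf : HasGradientAt f g x₀) (hx₀ : ∀ i, ⟪a i, x₀⟫_ℝ ≤ β i)
    (hmin : IsMinOn f {x | ∀ i, ⟪a i, x⟫_ℝ ≤ β i} x₀) :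
    ∃ μ : ι → ℝ, (∀ i, 0 ≤ μ i) ∧ (∀ i, μ i * (⟪a i, x₀⟫_ℝ - β i) = 0) ∧
      -g = ∑ i, μ i • a i := by
  classical
  set J := univ.filter fun i => ⟪a i, x₀⟫_ℝ = β i
  -- a direction entering the active half-spaces is a feasible direction, so Fermat's rule
  -- gives `⟪g, d⟫ ≥ 0`; Farkas' lemma then puts `-g` in the cone of the active normals
  have hdir : ∀ d, (∀ i ∈ J, ⟪a i, d⟫_ℝ ≤ 0) → ⟪-g, d⟫_ℝ ≤ 0 := by
    intro d hd
    obtain ⟨ε, hε, hεmem⟩ := exists_pos_forall_inner_add_smul_le hx₀ (d := d)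
      fun i hi => hd i (mem_filter.2 ⟨mem_univ i, hi⟩)
    have hseg := (convex_setOf_forall_inner_le a β).segment_subset hx₀ hεmem
    have hfermat := hmin.localize.hasFDerivWithinAt_nonneg hf.hasFDerivAt.hasFDerivWithinAt
      (mem_posTangentConeAt_of_segment_subset hseg)
    simp only [InnerProductSpace.toDual_apply_apply, real_inner_smul_right] at hfermat
    rw [inner_neg_left]
    nlinarith
  obtain ⟨μ, hμ, hsum⟩ := exists_nonneg_sum_smul_eq_of_forall_inner_nonpos hdir
  refine ⟨fun i => if ⟪a i, x₀⟫_ℝ = β i then μ i else 0, fun i => ?_, fun i => ?_, ?_⟩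
  · by_cases hi : ⟪a i, x₀⟫_ℝ = β i
    · simpa [hi] using hμ i (mem_filter.2 ⟨mem_univ i, hi⟩)
    · simp [hi]
  · by_cases hi : ⟪a i, x₀⟫_ℝ = β i <;> simp [hi]
  · simp only [← hsum, J, sum_filter, ite_smul, zero_smul]

theorem exists_sq_le_mul_sum_sq_of_isMinOn [FiniteDimensional ℝ H] {f : H → ℝ} {g : H}
    (hf : HasGradientAt f g x₀) (hconv : ∀ x, f x₀ + ⟪g, x - x₀⟫_ℝ ≤ f x)
    (hx₀ : ∀ i, ⟪a i, x₀⟫_ℝ ≤ β i) (hmin : IsMinOn f {x | ∀ i, ⟪a i, x⟫_ℝ ≤ β i} x₀) :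
    ∃ κ, 0 ≤ κ ∧ ∀ x, max (f x₀ - f x) 0 ^ 2 ≤ κ * ∑ i, max (⟪a i, x⟫_ℝ - β i) 0 ^ 2 := by
  obtain ⟨μ, hμ, hslack, hg⟩ := exists_kkt_of_isMinOn hf hx₀ hmin
  refine ⟨∑ i, μ i ^ 2, by positivity, fun x => ?_⟩
  have hlin : f x₀ - f x ≤ ∑ i, μ i * max (⟪a i, x⟫_ℝ - β i) 0 :=
    calc f x₀ - f x ≤ ⟪-g, x - x₀⟫_ℝ := by rw [inner_neg_left]; linarith [hconv x]
      _ = ∑ i, μ i * (⟪a i, x⟫_ℝ - β i) := by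
          rw [hg, sum_inner]
          refine sum_congr rfl fun i _ => ?_
          rw [real_inner_smul_left, inner_sub_right]
          linear_combination -(hslack i)
      _ ≤ ∑ i, μ i * max (⟪a i, x⟫_ℝ - β i) 0 :=
          sum_le_sum fun i _ => mul_le_mul_of_nonneg_left (le_max_left _ _) (hμ i)
  calc max (f x₀ - f x) 0 ^ 2 ≤ (∑ i, μ i * max (⟪a i, x⟫_ℝ - β i) 0) ^ 2 :=
        pow_le_pow_left₀ (le_max_right _ _)
          (max_le hlin (sum_nonneg fun i _ => mul_nonneg (hμ i) (le_max_right _ _))) 2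
    _ ≤ (∑ i, μ i ^ 2) * ∑ i, max (⟪a i, x⟫_ℝ - β i) 0 ^ 2 := sum_mul_sq_le_sq_mul_sq _ _ _

end KKT

theorem exists_sq_le_mul_sqViolation_sub {ι H : Type*} [Fintype ι] [NormedAddCommGroup H]
    [InnerProductSpace ℝ H] [FiniteDimensional ℝ H] {A : H →ₗ[ℝ] EuclideanSpace ℝ ι}
    {b : EuclideanSpace ℝ ι} {Q : H →ₗ[ℝ] H} {x₀ : H} (hQ : Q.IsPositive) (p : H)
    (hmin : ∀ x, sqViolation A b x₀ ≤ sqViolation A b x)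
    (hopt : ∀ x, sqViolation A b x ≤ sqViolation A b x₀ →
      quadraticObjective Q p x₀ ≤ quadraticObjective Q p x) :
    ∃ κ, 0 ≤ κ ∧ ∀ x, max (quadraticObjective Q p x₀ - quadraticObjective Q p x) 0 ^ 2 ≤
      κ * (sqViolation A b x - sqViolation A b x₀) := by
  classical
  set w := fun i => max ((A x₀ - b) i) 0
  set a := fun i => LinearMap.adjoint A (EuclideanSpace.single i 1)
  have ha : ∀ i x, ⟪a i, x⟫_ℝ = A x i := fun i x => by
    simp [a, LinearMap.adjoint_inner_left, EuclideanSpace.inner_single_left]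
  have hexcess : ∀ x i, ⟪a i, x⟫_ℝ - (b i + w i) = (A x - b) i - w i := fun x i => by
    simp only [ha, PiLp.sub_apply]; ring
  have hx₀ : ∀ i, ⟪a i, x₀⟫_ℝ ≤ b i + w i := fun i => by
    linarith [hexcess x₀ i, le_max_left ((A x₀ - b) i) 0]
  have hminOn : IsMinOn (quadraticObjective Q p) {x | ∀ i, ⟪a i, x⟫_ℝ ≤ b i + w i} x₀ := by
    refine fun x hx => hopt x (sum_le_sum fun i _ => ?_)
    have hle : (A x - b) i ≤ w i := by linarith [hexcess x i, hx i]
    exact pow_le_pow_left₀ (le_max_right _ _) (max_le hle (le_max_right _ _)) 2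
  obtain ⟨κ, hκ, hbound⟩ := exists_sq_le_mul_sum_sq_of_isMinOn
    (hasGradientAt_quadraticObjective p hQ.isSymmetric x₀)
    (quadraticObjective_add_inner_le p hQ x₀) hx₀ hminOn
  refine ⟨κ, hκ, fun x => (hbound x).trans (mul_le_mul_of_nonneg_left ?_ hκ)⟩
  simp only [hexcess]
  exact sum_sq_max_sub_le_sqViolation_sub hmin x

theorem stmt_15_general
    (n m : ℕ)
    (Q : EuclideanSpace ℝ (Fin n) →ₗ[ℝ] EuclideanSpace ℝ (Fin n))
    (hQsymm : ∀ x y : EuclideanSpace ℝ (Fin n), (inner ℝ (Q x) y : ℝ) = inner ℝ x (Q y))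
    (hQpsd : ∀ x : EuclideanSpace ℝ (Fin n), 0 ≤ (inner ℝ x (Q x) : ℝ))
    (p : EuclideanSpace ℝ (Fin n))
    (q : EuclideanSpace ℝ (Fin n) → ℝ)
    (hq : ∀ x, q x = (1/2) * (inner ℝ x (Q x) : ℝ) + (inner ℝ p x : ℝ))
    (C : Set (EuclideanSpace ℝ (Fin m)))
    (hC : C = {s : EuclideanSpace ℝ (Fin m) | ∀ i, 0 ≤ s i})
    (A : EuclideanSpace ℝ (Fin n) →ₗ[ℝ] EuclideanSpace ℝ (Fin m))
    (b : EuclideanSpace ℝ (Fin m))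
    (r₀ : EuclideanSpace ℝ (Fin n) → EuclideanSpace ℝ (Fin m) → ℝ)
    (hr₀ : ∀ x s, r₀ x s =
      (1/2) * ‖A x + s - b‖^2 + (1/2) * (Metric.infDist s C)^2)
    (r : EuclideanSpace ℝ (Fin n) → EuclideanSpace ℝ (Fin m) → ℝ → ℝ)
    (hr : ∀ x s t, r x s t = (1/2) * (max (q x - t) 0)^2 + r₀ x s)
    (rstar : ℝ → ℝ)
    (hrstar : ∀ t, rstar t =
      ⨅ z : EuclideanSpace ℝ (Fin n) × EuclideanSpace ℝ (Fin m), r z.1 z.2 t)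
    (X : Set (EuclideanSpace ℝ (Fin n) × EuclideanSpace ℝ (Fin m)))
    (hX : X = {z | ∀ (x' : EuclideanSpace ℝ (Fin n)) (s' : EuclideanSpace ℝ (Fin m)),
      r₀ z.1 z.2 ≤ r₀ x' s'})
    (tstar : ℝ)
    (xstar : EuclideanSpace ℝ (Fin n)) (sstar : EuclideanSpace ℝ (Fin m))
    (hxstar : (xstar, sstar) ∈ X) (hqstar : q xstar = tstar)
    (hopt : ∀ z ∈ X, tstar ≤ q z.1)
    (M : ℝ) (hM : M = r₀ xstar sstar) :
    ∃ a : ℝ, 0 < a ∧ ∀ t : ℝ, t ≤ tstar → a * (t - tstar)^2 + M ≤ rstar t := by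
  subst hM hqstar hC hX
  obtain rfl : q = quadraticObjective Q p := funext hq
  have hlow (x s) : sqViolation A b x / 4 ≤ r₀ x s := by
    rw [hr₀]; exact sqViolation_div_four_le A b x s
  have hattain (x) : ∃ s, r₀ x s ≤ sqViolation A b x / 4 := by
    obtain ⟨s, hs⟩ := exists_le_sqViolation_div_four A b x
    exact ⟨s, by rw [hr₀]; exact hs⟩
  have hM : r₀ xstar sstar ≤ sqViolation A b xstar / 4 := by
    obtain ⟨s, hs⟩ := hattain xstar
    linarith [hxstar xstar s]
  have hmin (x) : sqViolation A b xstar ≤ sqViolation A b x := by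
    obtain ⟨s, hs⟩ := hattain x
    linarith [hlow xstar sstar, hxstar x s]
  have hqmin (x) (hx : sqViolation A b x ≤ sqViolation A b xstar) :
      quadraticObjective Q p xstar ≤ quadraticObjective Q p x := by
    obtain ⟨s, hs⟩ := hattain x
    exact hopt (x, s) fun x' s' => by linarith [hlow xstar sstar, hxstar x' s']
  have hQ : Q.IsPositive := ⟨hQsymm, fun x => by rw [RCLike.re_to_real, hQsymm]; exact hQpsd x⟩
  obtain ⟨κ, hκ, hbound⟩ := exists_sq_le_mul_sqViolation_sub hQ p hmin hqmin
  refine ⟨1 / (4 * (4 * κ + 1)), by positivity, fun t ht => ?_⟩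
  rw [hrstar]
  refine le_ciInf fun z => ?_
  have hz : max (quadraticObjective Q p xstar - quadraticObjective Q p z.1) 0 ^ 2 ≤
      4 * κ * (r₀ z.1 z.2 - r₀ xstar sstar) := by
    nlinarith [hbound z.1, hlow z.1 z.2]
  have hgrowth := sq_sub_div_le_of_sq_max_le (by positivity) (sub_nonneg.2 (hxstar z.1 z.2)) ht hz
  rw [hr, one_div_mul_eq_div]
  linarith

/-- Lemma 7, quadratic growth of the value function:
`r⋆(t) ≥ a(t − t⋆)² + M` for all `t ≤ t⋆`, for some `a > 0`. -/
theorem stmt_15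
    (n m : ℕ)
    (Q : EuclideanSpace ℝ (Fin n) →ₗ[ℝ] EuclideanSpace ℝ (Fin n))
    (hQsymm : ∀ x y : EuclideanSpace ℝ (Fin n), (inner ℝ (Q x) y : ℝ) = inner ℝ x (Q y))
    (hQpsd : ∀ x : EuclideanSpace ℝ (Fin n), 0 ≤ (inner ℝ x (Q x) : ℝ))
    (p : EuclideanSpace ℝ (Fin n))
    (q : EuclideanSpace ℝ (Fin n) → ℝ)
    (hq : ∀ x, q x = (1/2) * (inner ℝ x (Q x) : ℝ) + (inner ℝ p x : ℝ))
    (C : Set (EuclideanSpace ℝ (Fin m)))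
    (hC : C = {s : EuclideanSpace ℝ (Fin m) | ∀ i, 0 ≤ s i})
    (A : EuclideanSpace ℝ (Fin n) →ₗ[ℝ] EuclideanSpace ℝ (Fin m))
    (b : EuclideanSpace ℝ (Fin m))
    (r₀ : EuclideanSpace ℝ (Fin n) → EuclideanSpace ℝ (Fin m) → ℝ)
    (hr₀ : ∀ x s, r₀ x s =
      (1/2) * ‖A x + s - b‖^2 + (1/2) * (Metric.infDist s C)^2)
    (r : EuclideanSpace ℝ (Fin n) → EuclideanSpace ℝ (Fin m) → ℝ → ℝ)
    (hr : ∀ x s t, r x s t = (1/2) * (max (q x - t) 0)^2 + r₀ x s)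
    (rstar : ℝ → ℝ)
    (hrstar : ∀ t, rstar t =
      ⨅ z : EuclideanSpace ℝ (Fin n) × EuclideanSpace ℝ (Fin m), r z.1 z.2 t)
    (X : Set (EuclideanSpace ℝ (Fin n) × EuclideanSpace ℝ (Fin m)))
    (hX : X = {z | ∀ (x' : EuclideanSpace ℝ (Fin n)) (s' : EuclideanSpace ℝ (Fin m)),
      r₀ z.1 z.2 ≤ r₀ x' s'})
    (hXne : X.Nonempty)
    (tstar : ℝ)
    (xstar : EuclideanSpace ℝ (Fin n)) (sstar : EuclideanSpace ℝ (Fin m))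
    (hxstar : (xstar, sstar) ∈ X) (hqstar : q xstar = tstar)
    (hopt : ∀ z ∈ X, tstar ≤ q z.1)
    (M : ℝ) (hM : M = r₀ xstar sstar) :
    ∃ a : ℝ, 0 < a ∧ ∀ t : ℝ, t ≤ tstar → a * (t - tstar)^2 + M ≤ rstar t :=
  stmt_15_general n m Q hQsymm hQpsd p q hq C hC A b r₀ hr₀ r hr rstar hrstar X hX tstar xstar sstar
    hxstar hqstar hopt M hM
end
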